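/- Let T be a finite tree with more than 2 vertices and exactly k internal (non-leaf) vertices, each of degree greater than 2. Then T can be expressed as an iterated gluing of k star trees, where the gluing of two trees T1 and T2 along leaf-incident edges e1 = {v1,k1} (k1 a leaf of T1) and e2 = {v2,k2} (k2 a leaf of T2) is the tree obtained by deleting the leaves k1 and k2 and adding the edge {v1,v2}. -/

import Mathlib

open Classical SimpleGraph

noncomputable section

/-- A leaf of a graph: a vertex with exactly one neighbor. -/
def IsLeaf {V : Type*} (G : SimpleGraph V) (v : V) : Prop := ∃! w, G.Adj v w

/-- A star tree: a tree with exactly one internal (non-leaf) vertex. -/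
def IsStar {V : Type*} (G : SimpleGraph V) : Prop := G.IsTree ∧ ∃! u, ¬ IsLeaf G u

/-- Vertex set of the gluing of two graphs along the leaves `k1`, `k2`:
the disjoint union with the two leaves removed. -/
def GlueV (V1 V2 : Type) (k1 : V1) (k2 : V2) : Type :=
  {x : V1 ⊕ V2 // x ≠ Sum.inl k1 ∧ x ≠ Sum.inr k2}

def glueAdj {V1 V2 : Type} (G1 : SimpleGraph V1) (G2 : SimpleGraph V2) (v1 : V1) (v2 : V2) :
    V1 ⊕ V2 → V1 ⊕ V2 → Prop
  | Sum.inl x, Sum.inl y => G1.Adj x y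
  | Sum.inr x, Sum.inr y => G2.Adj x y
  | Sum.inl x, Sum.inr y => x = v1 ∧ y = v2
  | Sum.inr x, Sum.inl y => x = v2 ∧ y = v1

/-- The gluing `T1 *_{e1,e2} T2` along the leaf edges `e1 = {v1,k1}`, `e2 = {v2,k2}`:
delete the leaves `k1`, `k2` and add the edge `{v1,v2}`. -/
def glueGraph {V1 V2 : Type} (G1 : SimpleGraph V1) (G2 : SimpleGraph V2)
    (v1 k1 : V1) (v2 k2 : V2) : SimpleGraph (GlueV V1 V2 k1 k2) where
  Adj a b := glueAdj G1 G2 v1 v2 a.1 b.1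
  symm := by
    constructor
    rintro ⟨(x|x), _⟩ ⟨(y|y), _⟩ h <;> simp only [glueAdj] at * <;>
      first | exact h.symm | tauto
  loopless := by
    constructor
    rintro ⟨(x|x), _⟩ h <;> simp only [glueAdj] at h <;>
      first | exact G1.irrefl h | exact G2.irrefl h

/-- `StarGluing G L` : `G` is an iterated gluing of star trees, one star with `n` leaves
for each entry `n` of the list `L`, the gluings being performed along leaf-incident edges. -/
inductive StarGluing : {V : Type} → SimpleGraph V → List ℕ → Prop
  | star {V : Type} (G : SimpleGraph V) (n : ℕ) (hstar : IsStar G)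
      (hn : Set.ncard {v | IsLeaf G v} = n) : StarGluing G [n]
  | glue {V1 V2 : Type} (G1 : SimpleGraph V1) (G2 : SimpleGraph V2)
      (v1 k1 : V1) (v2 k2 : V2) (L1 L2 : List ℕ)
      (h1 : StarGluing G1 L1) (h2 : StarGluing G2 L2)
      (hk1 : IsLeaf G1 k1) (hk2 : IsLeaf G2 k2)
      (hv1 : G1.Adj k1 v1) (hv2 : G2.Adj k2 v2) :
      StarGluing (glueGraph G1 G2 v1 k1 v2 k2) (L1 ++ L2)

/-!
Cut the tree at an edge `uv` joining two internal vertices. The side of `u`, with `v` kept as a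
pendant leaf, and the side of `v`, with `u` kept as a pendant leaf, are trees; gluing them along
these two leaves gives back the tree, and the internal vertices of each are the internal vertices
of the tree on that side. Induction on the number of internal vertices therefore reduces to trees
in which no two internal vertices are adjacent. Such a tree with an internal vertex `c` is a star:
on the path from `c` to any other internal vertex, the vertex after `c` would be a leaf with two
neighbours.
-/

lemma IsStar.ncard_setOf_not_isLeaf {V : Type*} {G : SimpleGraph V} (h : IsStar G) :
    {v | ¬ IsLeaf G v}.ncard = 1 :=
  let ⟨c, hc, huniq⟩ := h.2
  Set.ncard_eq_one.2 ⟨c, Set.eq_singleton_iff_unique_mem.2 ⟨hc, huniq⟩⟩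

namespace SimpleGraph

section Leaves

variable {V W : Type*} {G : SimpleGraph V} {H : SimpleGraph W}

lemma Iso.isLeaf_iff (φ : G ≃g H) {v : V} : IsLeaf H (φ v) ↔ IsLeaf G v :=
  (φ.toEquiv.existsUnique_congr fun _ ↦ φ.map_adj_iff.symm).symm

lemma Iso.ncard_setOf_not_isLeaf (φ : G ≃g H) :
    {w | ¬ IsLeaf H w}.ncard = {v | ¬ IsLeaf G v}.ncard := by
  have hpre : φ ⁻¹' {w | ¬ IsLeaf H w} = {v | ¬ IsLeaf G v} := Set.ext fun _ ↦ φ.isLeaf_iff.not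
  rw [← hpre, Set.ncard_preimage_of_injective_subset_range φ.injective (by simp)]

lemma isLeaf_induce_iff {s : Set V} {x : V} (hx : x ∈ s) (hs : ∀ y, G.Adj x y → y ∈ s) :
    IsLeaf (G.induce s) ⟨x, hx⟩ ↔ IsLeaf G x := by
  constructor
  · rintro ⟨w, hw, huniq⟩
    exact ⟨w, hw, fun y hy ↦ congrArg Subtype.val (huniq ⟨y, hs y hy⟩ hy)⟩
  · rintro ⟨w, hw, huniq⟩
    exact ⟨⟨w, hs w hw⟩, hw, fun y hy ↦ Subtype.ext (huniq y hy)⟩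

lemma IsTree.exists_not_isLeaf [Fintype V] (hG : G.IsTree) (hcard : 2 < Fintype.card V) :
    ∃ v, ¬ IsLeaf G v := by
  by_contra! hleaf
  have hdeg (v : V) : G.degree v = 1 := degree_eq_one_iff_existsUnique_adj.2 (hleaf v)
  have hsum := G.sum_degrees_eq_twice_card_edges
  simp only [hdeg, Finset.sum_const, Finset.card_univ, smul_eq_mul, mul_one] at hsum
  have := hG.card_edgeFinset
  omega

lemma IsTree.isStar_of_forall_adj_isLeaf {c : V} (hG : G.IsTree) (hc : ¬ IsLeaf G c)
    (hleaf : ∀ x y, G.Adj x y → ¬ IsLeaf G x → IsLeaf G y) : IsStar G := by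
  refine ⟨hG, c, hc, fun w hw ↦ ?_⟩
  by_contra hwc
  obtain ⟨p, hp⟩ := (hG.1.preconnected c w).exists_isPath
  have hnil : ¬ p.Nil := Walk.not_nil_of_ne (Ne.symm hwc)
  have hsnd : IsLeaf G p.snd := hleaf _ _ (p.adj_snd hnil) hc
  refine hp.isTrail.not_mem_support_of_subsingleton_neighborSet (x := p.snd) ?_ ?_
    (fun _ ha _ hb ↦ hsnd.unique ha hb) (p.getVert_mem_support 1)
  · exact (p.adj_snd hnil).ne'
  · rintro h
    exact hw (h ▸ hsnd)

end Leaves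

section Branch

variable {V : Type*} {G : SimpleGraph V} {u v x y : V}

def side (G : SimpleGraph V) (u v : V) : Set V := {w | (G.deleteEdges {s(u, v)}).Reachable u w}

lemma self_mem_side : u ∈ G.side u v := Reachable.refl _

lemma mem_side_of_adj (hx : x ∈ G.side u v) (hxy : G.Adj x y) :
    y ∈ G.side u v ∨ x = u ∧ y = v := by
  by_cases he : s(x, y) = s(u, v)
  · rcases Sym2.eq_iff.1 he with ⟨rfl, rfl⟩ | ⟨rfl, rfl⟩
    · exact .inr ⟨rfl, rfl⟩
    · exact .inl self_mem_side
  · exact .inl (hx.trans (Adj.reachable (by simpa [he] using hxy)))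

lemma mem_side_or_mem_side (hG : G.Connected) (w : V) : w ∈ G.side u v ∨ w ∈ G.side v u := by
  obtain ⟨p⟩ := hG.preconnected w u
  induction p with
  | nil => exact .inl self_mem_side
  | cons h _ ih =>
    rcases ih with hx | hx
    · rcases mem_side_of_adj hx h.symm with hw | ⟨-, rfl⟩
      exacts [.inl hw, .inr self_mem_side]
    · rcases mem_side_of_adj hx h.symm with hw | ⟨-, rfl⟩
      exacts [.inr hw, .inl self_mem_side]

lemma IsAcyclic.not_mem_side_of_mem_side (hG : G.IsAcyclic) (hadj : G.Adj u v)
    (hx : x ∈ G.side u v) : x ∉ G.side v u := by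
  intro hx'
  rw [side, Sym2.eq_swap] at hx'
  exact isAcyclic_iff_forall_adj_isBridge.1 hG hadj (hx.trans hx'.symm)

lemma IsTree.compl_side (hG : G.IsTree) (hadj : G.Adj u v) : (G.side u v)ᶜ = G.side v u :=
  Set.ext fun _ ↦ ⟨(mem_side_or_mem_side hG.1 _).resolve_left,
    fun hx hx' ↦ hG.2.not_mem_side_of_mem_side hadj hx' hx⟩

lemma val_mem_side_of_ne {a : (insert v (G.side u v) : Set V)}
    (ha : a ≠ ⟨v, Set.mem_insert _ _⟩) : a.1 ∈ G.side u v :=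
  a.2.resolve_left fun h ↦ ha (Subtype.ext h)

def branch (G : SimpleGraph V) (u v : V) : SimpleGraph (insert v (G.side u v) : Set V) :=
  G.induce (insert v (G.side u v))

lemma isLeaf_branch_iff (hx : x ∈ G.side u v) :
    IsLeaf (G.branch u v) ⟨x, Set.mem_insert_of_mem _ hx⟩ ↔ IsLeaf G x :=
  isLeaf_induce_iff _ fun _ hxy ↦ (mem_side_of_adj hx hxy).elim
    (Set.mem_insert_of_mem _) (fun h ↦ h.2 ▸ Set.mem_insert _ _)

lemma IsAcyclic.isLeaf_branch (hG : G.IsAcyclic) (hadj : G.Adj u v) :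
    IsLeaf (G.branch u v) ⟨v, Set.mem_insert _ _⟩ := by
  refine ⟨⟨u, Set.mem_insert_of_mem _ self_mem_side⟩, hadj.symm, ?_⟩
  rintro ⟨y, rfl | hy⟩ hvy
  · exact absurd hvy (G.loopless.irrefl _)
  · exact Subtype.ext (mem_side_of_adj hy hvy.symm |>.resolve_left
      (hG.not_mem_side_of_mem_side hadj.symm self_mem_side)).1

lemma connected_branch (hadj : G.Adj u v) : (G.branch u v).Connected := by
  have hu : u ∈ insert v (G.side u v) := Set.mem_insert_of_mem _ self_mem_side
  refine (connected_iff_exists_forall_reachable _).2 ⟨⟨u, hu⟩, ?_⟩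
  rintro ⟨w, rfl | hw⟩
  · exact Adj.reachable (show G.Adj u w from hadj)
  · obtain ⟨q⟩ : (G.deleteEdges {s(u, v)}).Reachable u w := hw
    refine ⟨(q.mapLe (G.deleteEdges_le _)).induce _ fun x hx ↦ Set.mem_insert_of_mem _ ?_⟩
    rw [Walk.support_mapLe_eq_support] at hx
    exact ⟨q.takeUntil x hx⟩

lemma IsTree.isTree_branch (hG : G.IsTree) (hadj : G.Adj u v) : (G.branch u v).IsTree :=
  ⟨connected_branch hadj, hG.2.induce _⟩

lemma IsAcyclic.ncard_setOf_not_isLeaf_branch (hG : G.IsAcyclic) (hadj : G.Adj u v) :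
    {w | ¬ IsLeaf (G.branch u v) w}.ncard = ({x | ¬ IsLeaf G x} ∩ G.side u v).ncard := by
  rw [← Set.ncard_image_of_injective _ Subtype.val_injective]
  congr 1
  ext x
  constructor
  · rintro ⟨⟨x, rfl | hx⟩, hleaf, rfl⟩
    · exact absurd (hG.isLeaf_branch hadj) hleaf
    · exact ⟨(isLeaf_branch_iff hx).not.1 hleaf, hx⟩
  · rintro ⟨hleaf, hx⟩
    exact ⟨_, (isLeaf_branch_iff hx).not.2 hleaf, rfl⟩

end Branch

section Gluing

variable {V : Type} {G : SimpleGraph V} {u v : V}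

lemma IsTree.bijective_val_glueV_branch (hG : G.IsTree) (hadj : G.Adj u v) :
    Function.Bijective fun w : GlueV (insert v (G.side u v) : Set V)
        (insert u (G.side v u) : Set V) ⟨v, Set.mem_insert _ _⟩ ⟨u, Set.mem_insert _ _⟩ ↦
      Sum.elim Subtype.val Subtype.val w.1 := by
  have hdisj {x : V} (hx : x ∈ G.side u v) : x ∉ G.side v u :=
    hG.2.not_mem_side_of_mem_side hadj hx
  constructor
  · rintro ⟨a | a, ha₁, ha₂⟩ ⟨b | b, hb₁, hb₂⟩ (h : a.1 = b.1)
    · exact Subtype.ext (congrArg Sum.inl (Subtype.ext h))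
    · exact absurd (h ▸ val_mem_side_of_ne (ne_of_apply_ne Sum.inr hb₂))
        (hdisj (val_mem_side_of_ne (ne_of_apply_ne Sum.inl ha₁)))
    · exact absurd (h ▸ val_mem_side_of_ne (ne_of_apply_ne Sum.inr ha₂))
        (hdisj (val_mem_side_of_ne (ne_of_apply_ne Sum.inl hb₁)))
    · exact Subtype.ext (congrArg Sum.inr (Subtype.ext h))
  · intro x
    by_cases hx : x ∈ G.side u v
    · refine ⟨⟨.inl ⟨x, Set.mem_insert_of_mem _ hx⟩, ?_, Sum.inl_ne_inr⟩, rfl⟩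
      simp only [ne_eq, Sum.inl.injEq, Subtype.mk.injEq]
      rintro rfl
      exact hdisj hx self_mem_side
    · have hx' := (mem_side_or_mem_side hG.1 x).resolve_left hx
      refine ⟨⟨.inr ⟨x, Set.mem_insert_of_mem _ hx'⟩, Sum.inr_ne_inl, ?_⟩, rfl⟩
      simp only [ne_eq, Sum.inr.injEq, Subtype.mk.injEq]
      rintro rfl
      exact hx self_mem_side

lemma IsTree.nonempty_iso_glueGraph_branch (hG : G.IsTree) (hadj : G.Adj u v) :
    Nonempty (G ≃g glueGraph (G.branch u v) (G.branch v u)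
      ⟨u, Set.mem_insert_of_mem _ self_mem_side⟩ ⟨v, Set.mem_insert _ _⟩
      ⟨v, Set.mem_insert_of_mem _ self_mem_side⟩ ⟨u, Set.mem_insert _ _⟩) := by
  have hdisj {x : V} (hx : x ∈ G.side u v) : x ∉ G.side v u :=
    hG.2.not_mem_side_of_mem_side hadj hx
  refine ⟨RelIso.symm ⟨.ofBijective _ (hG.bijective_val_glueV_branch hadj), ?_⟩⟩
  rintro ⟨a | a, ha₁, ha₂⟩ ⟨b | b, hb₁, hb₂⟩
  · exact Iff.rfl
  · show G.Adj a.1 b.1 ↔ a = _ ∧ b = _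
    refine ⟨fun h ↦ ?_, fun ⟨ha, hb⟩ ↦ ha ▸ hb ▸ hadj⟩
    have hb := val_mem_side_of_ne (ne_of_apply_ne Sum.inr hb₂)
    obtain hb' | ⟨hau, hbv⟩ :=
      mem_side_of_adj (val_mem_side_of_ne (ne_of_apply_ne Sum.inl ha₁)) h
    exacts [absurd hb (hdisj hb'), ⟨Subtype.ext hau, Subtype.ext hbv⟩]
  · show G.Adj a.1 b.1 ↔ a = _ ∧ b = _
    refine ⟨fun h ↦ ?_, fun ⟨ha, hb⟩ ↦ ha ▸ hb ▸ hadj.symm⟩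
    have hb := val_mem_side_of_ne (ne_of_apply_ne Sum.inl hb₁)
    obtain hb' | ⟨hav, hbu⟩ :=
      mem_side_of_adj (val_mem_side_of_ne (ne_of_apply_ne Sum.inr ha₂)) h
    exacts [absurd hb' (hdisj hb), ⟨Subtype.ext hav, Subtype.ext hbu⟩]
  · exact Iff.rfl

def Iso.glueGraph {V₁ V₂ W₁ W₂ : Type} {G₁ : SimpleGraph V₁} {G₂ : SimpleGraph V₂}
    {H₁ : SimpleGraph W₁} {H₂ : SimpleGraph W₂} (φ₁ : G₁ ≃g H₁) (φ₂ : G₂ ≃g H₂)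
    (v₁ k₁ : V₁) (v₂ k₂ : V₂) :
    glueGraph G₁ G₂ v₁ k₁ v₂ k₂ ≃g glueGraph H₁ H₂ (φ₁ v₁) (φ₁ k₁) (φ₂ v₂) (φ₂ k₂) where
  toEquiv := (Equiv.sumCongr φ₁.toEquiv φ₂.toEquiv).subtypeEquiv <| by
    rintro (x | x) <;> simp
  map_rel_iff' := by
    rintro ⟨x | x, _⟩ ⟨y | y, _⟩
    · exact φ₁.map_adj_iff
    · exact and_congr φ₁.injective.eq_iff φ₂.injective.eq_iff
    · exact and_congr φ₂.injective.eq_iff φ₁.injective.eq_iff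
    · exact φ₂.map_adj_iff

end Gluing

end SimpleGraph

def IsIteratedStarGluing {V : Type*} (G : SimpleGraph V) (k : ℕ) : Prop :=
  ∃ (W : Type) (H : SimpleGraph W) (L : List ℕ),
    Nonempty (G ≃g H) ∧ StarGluing H L ∧ L.length = k

namespace IsIteratedStarGluing

lemma of_iso {V W : Type*} {G : SimpleGraph V} {H : SimpleGraph W} {k : ℕ} (φ : G ≃g H)
    (h : IsIteratedStarGluing H k) : IsIteratedStarGluing G k :=
  let ⟨W, H', L, ⟨ψ⟩, hL, hk⟩ := h
  ⟨W, H', L, ⟨φ.trans ψ⟩, hL, hk⟩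

lemma of_isStar {V : Type} {G : SimpleGraph V} (h : IsStar G) : IsIteratedStarGluing G 1 :=
  ⟨V, G, _, ⟨.refl⟩, .star G _ h rfl, rfl⟩

lemma glue {V₁ V₂ : Type} {G₁ : SimpleGraph V₁} {G₂ : SimpleGraph V₂} {m n : ℕ}
    {v₁ k₁ : V₁} {v₂ k₂ : V₂} (h₁ : IsIteratedStarGluing G₁ m) (h₂ : IsIteratedStarGluing G₂ n)
    (hk₁ : IsLeaf G₁ k₁) (hk₂ : IsLeaf G₂ k₂) (hv₁ : G₁.Adj k₁ v₁) (hv₂ : G₂.Adj k₂ v₂) :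
    IsIteratedStarGluing (glueGraph G₁ G₂ v₁ k₁ v₂ k₂) (m + n) := by
  obtain ⟨W₁, H₁, L₁, ⟨φ₁⟩, hL₁, rfl⟩ := h₁
  obtain ⟨W₂, H₂, L₂, ⟨φ₂⟩, hL₂, rfl⟩ := h₂
  exact ⟨_, _, L₁ ++ L₂, ⟨φ₁.glueGraph φ₂ v₁ k₁ v₂ k₂⟩,
    .glue H₁ H₂ _ _ _ _ L₁ L₂ hL₁ hL₂ (φ₁.isLeaf_iff.2 hk₁) (φ₂.isLeaf_iff.2 hk₂)
      (φ₁.map_adj_iff.2 hv₁) (φ₂.map_adj_iff.2 hv₂), List.length_append⟩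

end IsIteratedStarGluing

theorem SimpleGraph.IsTree.isIteratedStarGluing {V : Type} [Finite V] {G : SimpleGraph V}
    (hG : G.IsTree) (hint : ∃ v, ¬ IsLeaf G v) :
    IsIteratedStarGluing G {v | ¬ IsLeaf G v}.ncard := by
  induction hn : {v | ¬ IsLeaf G v}.ncard using Nat.strong_induction_on generalizing V with
  | _ n ih =>
  obtain ⟨c, hc⟩ := hint
  by_cases hleaf : ∀ x y, G.Adj x y → ¬ IsLeaf G x → IsLeaf G y
  · have hstar := hG.isStar_of_forall_adj_isLeaf hc hleaf
    rw [← hn, hstar.ncard_setOf_not_isLeaf]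
    exact .of_isStar hstar
  push Not at hleaf
  obtain ⟨u, v, hadj, hu, hv⟩ := hleaf
  have hsum : n = ({x | ¬ IsLeaf G x} ∩ G.side u v).ncard
      + ({x | ¬ IsLeaf G x} ∩ G.side v u).ncard := by
    rw [← hG.compl_side hadj, ← Set.sdiff_eq, Set.ncard_inter_add_ncard_sdiff_eq_ncard, hn]
  have hpos₁ : 0 < ({x | ¬ IsLeaf G x} ∩ G.side u v).ncard :=
    (Set.ncard_pos).2 ⟨u, hu, self_mem_side⟩
  have hpos₂ : 0 < ({x | ¬ IsLeaf G x} ∩ G.side v u).ncard :=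
    (Set.ncard_pos).2 ⟨v, hv, self_mem_side⟩
  have hbranch {u v : V} (hadj : G.Adj u v) (hu : ¬ IsLeaf G u)
      (hlt : ({x | ¬ IsLeaf G x} ∩ G.side u v).ncard < n) :
      IsIteratedStarGluing (G.branch u v) ({x | ¬ IsLeaf G x} ∩ G.side u v).ncard :=
    ih _ hlt (hG.isTree_branch hadj) ⟨_, (isLeaf_branch_iff self_mem_side).not.2 hu⟩
      (hG.2.ncard_setOf_not_isLeaf_branch hadj)
  obtain ⟨φ⟩ := hG.nonempty_iso_glueGraph_branch hadj
  rw [hsum]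
  exact .of_iso φ <| .glue (hbranch hadj hu (by omega)) (hbranch hadj.symm hv (by omega))
    (hG.2.isLeaf_branch hadj) (hG.2.isLeaf_branch hadj.symm) hadj.symm hadj

theorem tree_is_iterated_star_gluing_general {V : Type*} [Fintype V] (G : SimpleGraph V)
    (hG : G.IsTree) (hcard : 2 < Fintype.card V)
    (hk : Set.ncard {v | ¬ IsLeaf G v} = k) :
    ∃ (W : Type) (H : SimpleGraph W) (L : List ℕ),
      Nonempty (G ≃g H) ∧ StarGluing H L ∧ L.length = k := by
  let φ := Iso.map (Fintype.equivFin V) G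
  obtain ⟨v, hv⟩ := hG.exists_not_isLeaf hcard
  have h := (φ.isTree_iff.1 hG).isIteratedStarGluing ⟨φ v, φ.isLeaf_iff.not.2 hv⟩
  rw [φ.ncard_setOf_not_isLeaf, hk] at h
  exact h.of_iso φ

/-- A finite tree with more than 2 vertices, having exactly `k` internal
vertices each of degree `> 2`, can be expressed (up to isomorphism) as an iterated gluing
of `k` star trees. -/
theorem tree_is_iterated_star_gluing {V : Type*} [Fintype V] (G : SimpleGraph V)
    (hG : G.IsTree) (hcard : 2 < Fintype.card V)
    (hk : Set.ncard {v | ¬ IsLeaf G v} = k)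
    (hdeg : ∀ v, ¬ IsLeaf G v → 2 < (G.neighborSet v).ncard) :
    ∃ (W : Type) (H : SimpleGraph W) (L : List ℕ),
      Nonempty (G ≃g H) ∧ StarGluing H L ∧ L.length = k :=
  tree_is_iterated_star_gluing_general G hG hcard hk
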